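/- arXiv:quant-ph/0312017 — 4 statements merged into one kernel-verified Lean document; each statement's English description precedes it below -/
import Mathlib

section
/- For all integers M ≥ 1 and L ≥ M + 1, the charge in [−L,0] commutes with the energy current at site −M: [N_{[−L,0]}, J_{−M}] = 0. (This follows from the Jacobi identity: [N_{[−L,0]}, [H_{[−M,M+1]}, H_{[−M−1,M+2]}]] reduces to [H_{[−M,M+1]}, −j_{0,1}] + [H_{[−M−1,M+2]}, j_{0,1}], which vanishes by locality, while the commutator of N_{[−L,0]} with the other boundary current J_{M+1} vanishes directly.) -/
/-- For integers `M ≥ 1` and `L ≥ M + 1`, the charge in `[-L,0]`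
commutes with the energy current at site `-M`: `[N_{[-L,0]}, J_{-M}] = 0`. -/
theorem charge_commutes_left_energy_current
    (A : Type*) [Ring A] [Algebra ℂ A]
    (n h : ℤ → A)
    (hloc : ∀ x y : ℤ, x ≠ y → x ≠ y + 1 → n x * h y - h y * n x = 0)
    (hloch : ∀ x y : ℤ, 2 ≤ |x - y| → h x * h y - h y * h x = 0)
    (hcons : ∀ y : ℤ, (n y + n (y + 1)) * h y - h y * (n y + n (y + 1)) = 0)
    (M L : ℤ) (hM : 1 ≤ M) (hL : M + 1 ≤ L) :
    (∑ x ∈ Finset.Icc (-L) 0, n x)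
        * (Complex.I • (h (-M - 1) * h (-M) - h (-M) * h (-M - 1)))
      - (Complex.I • (h (-M - 1) * h (-M) - h (-M) * h (-M - 1)))
        * (∑ x ∈ Finset.Icc (-L) 0, n x) = 0 := by
  set N := ∑ x ∈ Finset.Icc (-L) 0, n x with hN
  -- N commutes with h y whenever both y and y+1 lie in [-L, 0]
  have key : ∀ y : ℤ, -L ≤ y → y + 1 ≤ 0 → N * h y = h y * N := by
    intro y hy1 hy2
    have hsub : ({y, y + 1} : Finset ℤ) ⊆ Finset.Icc (-L) 0 := by
      intro z hz
      simp only [Finset.mem_insert, Finset.mem_singleton] at hz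
      rcases hz with rfl | rfl <;> simp only [Finset.mem_Icc] <;> omega
    have hzero : N * h y - h y * N = 0 := by
      have : N * h y - h y * N = ∑ x ∈ Finset.Icc (-L) 0, (n x * h y - h y * n x) := by
        rw [hN, Finset.sum_mul, Finset.mul_sum, ← Finset.sum_sub_distrib]
      rw [this, ← Finset.sum_subset hsub (by
        intro x _ hx
        simp only [Finset.mem_insert, Finset.mem_singleton, not_or] at hx
        exact hloc x y hx.1 hx.2)]
      rw [Finset.sum_pair (by omega : y ≠ y + 1)]
      have := hcons y
      linear_combination (norm := noncomm_ring) this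
    exact sub_eq_zero.mp hzero
  have hA : N * h (-M - 1) = h (-M - 1) * N := key (-M - 1) (by omega) (by omega)
  have hB : N * h (-M) = h (-M) * N := key (-M) (by omega) (by omega)
  set a := h (-M - 1)
  set b := h (-M)
  have hX : N * (a * b - b * a) = (a * b - b * a) * N := by
    rw [mul_sub, sub_mul, ← mul_assoc, ← mul_assoc, hA, hB,
      mul_assoc, mul_assoc, hB, hA, ← mul_assoc, ← mul_assoc]
  rw [mul_smul_comm, smul_mul_assoc, hX, sub_self]
end

section
/- Under hypotheses (i)–(iii), for every T > 0 and every square-integrable function f : ℝ → ℂ with support contained in [−T, T], the Bochner integrals ∫ f(t) · i[N_{[−L,0]}, α_t(H_{[−M,M+1]})] dt exist and the iterated limit lim_{M→∞} lim_{L→∞} ∫ f(t) · i[N_{[−L,0]}, α_t(H_{[−M,M+1]})] dt exists in the norm of A and equals √(2π) · f̂(0) · j_{0,1}, where f̂(ε) := (1/√(2π)) ∫ f(t) e^{iεt} dt, so that √(2π)·f̂(0) = ∫ f(t) dt. (Since [a − c·1, b − d·1] = [a, b] for scalars c, d, subtracting expectation values from N and H does not change the commutator, so this is the statement of Lemma 2.)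 -/
/-!
Write `c(t) = i[N_{[-L,0]}, α_t(H_{[-M,M+1]})]`. Locality and charge conservation give
`c(0) = j_{0,1}` and `[N_{[-L,0]}, J_{-M} - J_{M+1}] = 0`, and
`c'(t) = i[N_{[-L,0]}, α_t(J_{-M} - J_{M+1})]`. Moving the flow onto the charge,
`[N, α_s(J)] = α_s [α_{-s}(N), J]`, where `α_{-s}(N) - N` is driven by the boundary currents
`j_{-L-1,-L}` and `j_{0,1}`; by the Lieb–Robinson bounds their commutators with `J_{-M}` and
`J_{M+1}` are exponentially small in `L - M` and in `M`. Two mean value estimates give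
`‖c(t) - j_{0,1}‖ ≲ T² (e^{-(L-M)} + e^{-M})` and a Cauchy estimate in `L`, uniformly for
`|t| ≤ T`, and integrating against `f` yields the iterated limit.
-/

open MeasureTheory Filter Topology

section Analysis

variable {E : Type*} [NormedAddCommGroup E]

theorem norm_sub_le_of_hasDerivAt_of_abs_le [NormedSpace ℝ E] {f f' : ℝ → E} {T B t : ℝ}
    (hf : ∀ u, HasDerivAt f (f' u) u) (hB : ∀ u, |u| ≤ T → ‖f' u‖ ≤ B) (ht : |t| ≤ T) :
    ‖f t - f 0‖ ≤ B * |t| := by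
  have hT : 0 ≤ T := (abs_nonneg t).trans ht
  simpa using (convex_Icc (-T) T).norm_image_sub_le_of_norm_hasDerivWithin_le
    (fun u _ => (hf u).hasDerivWithinAt) (fun u hu => hB u (abs_le.2 hu))
    ⟨neg_nonpos.2 hT, hT⟩ (abs_le.1 ht)

theorem cauchySeq_of_norm_sub_le {ι : Type*} [Nonempty ι] [SemilatticeSup ι] {x : ι → E}
    {δ : ι → ℝ} (hδ : Tendsto δ atTop (𝓝 0))
    (hx : ∀ᶠ p in atTop ×ˢ atTop, ‖x p.1 - x p.2‖ ≤ δ p.1 + δ p.2) : CauchySeq x := by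
  rw [cauchySeq_iff_tendsto_dist_atTop_0, ← prod_atTop_atTop_eq]
  refine squeeze_zero' (Eventually.of_forall fun _ => dist_nonneg)
    (by simpa only [dist_eq_norm] using hx) ?_
  simpa using (hδ.comp tendsto_fst).add (hδ.comp tendsto_snd)

theorem tendsto_of_eventually_norm_sub_le {ι κ : Type*} {l : Filter ι} {l' : Filter κ}
    [l'.NeBot] {x : ι → κ → E} {g : ι → E} {a : E} {δ : ι → κ → ℝ} {η : ι → ℝ}
    (hxg : ∀ᶠ i in l, Tendsto (x i) l' (𝓝 (g i))) (hδ : ∀ i, Tendsto (δ i) l' (𝓝 0))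
    (hη : Tendsto η l (𝓝 0)) (hx : ∀ᶠ i in l, ∀ᶠ k in l', ‖x i k - a‖ ≤ δ i k + η i) :
    Tendsto g l (𝓝 a) := by
  rw [tendsto_iff_norm_sub_tendsto_zero]
  refine squeeze_zero' (Eventually.of_forall fun _ => norm_nonneg _) ?_ hη
  filter_upwards [hxg, hx] with i hi hik
  simpa using le_of_tendsto_of_tendsto (hi.sub_const a).norm ((hδ i).add_const (η i)) hik

theorem exists_tendsto_tendsto_of_norm_sub_le [CompleteSpace E] {x : ℤ → ℤ → E} {a : E}
    {ε : ℤ → ℝ} {m k : ℤ} (hε : Tendsto ε atTop (𝓝 0))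
    (hx : ∀ M, m ≤ M → ∀ L L', M + k ≤ L → M + k ≤ L' →
      ‖x M L - x M L'‖ ≤ ε (L - M) + ε (L' - M))
    (hxa : ∀ M, k ≤ M → ∀ L, M + k ≤ L → ‖x M L - a‖ ≤ ε (L - M) + ε M) :
    ∃ g : ℤ → E, (∀ M, m ≤ M → Tendsto (x M) atTop (𝓝 (g M))) ∧ Tendsto g atTop (𝓝 a) := by
  have hεM (M : ℤ) : Tendsto (fun L => ε (L - M)) atTop (𝓝 0) :=
    hε.comp (by simpa only [sub_eq_add_neg, id] using
      tendsto_atTop_add_const_right atTop (-M) tendsto_id)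
  have hcauchy (M : ℤ) (hM : m ≤ M) : CauchySeq (x M) :=
    cauchySeq_of_norm_sub_le (hεM M) <|
      ((eventually_ge_atTop (M + k)).prod_mk (eventually_ge_atTop (M + k))).mono
        fun p hp => hx M hM p.1 p.2 hp.1 hp.2
  refine ⟨fun M => limUnder atTop (x M), fun M hM => (hcauchy M hM).tendsto_limUnder, ?_⟩
  exact tendsto_of_eventually_norm_sub_le
    ((eventually_ge_atTop m).mono fun M hM => (hcauchy M hM).tendsto_limUnder) hεM hε
    ((eventually_ge_atTop k).mono fun M hM => (eventually_ge_atTop (M + k)).mono (hxa M hM))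

theorem MeasureTheory.MemLp.integrable_of_support_subset {X : Type*} [MeasurableSpace X]
    {μ : Measure X} {f : X → E} {p : ENNReal} {s : Set X} (hf : MemLp f p μ) (hp : 1 ≤ p)
    (hs : μ s ≠ ⊤) (hfs : Function.support f ⊆ s) : Integrable f μ :=
  memLp_one_iff_integrable.1 <| hf.mono_exponent_of_measure_support_ne_top
    (fun _ hx => Function.notMem_support.1 fun h => hx (hfs h)) hs hp

variable [NormedSpace ℂ E]

theorem MeasureTheory.Integrable.smul_continuous_of_support_subset {f : ℝ → ℂ} {g : ℝ → E}
    {K : Set ℝ} (hf : Integrable f) (hg : Continuous g) (hK : IsCompact K)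
    (hfK : Function.support f ⊆ K) : Integrable fun t => f t • g t :=
  (integrableOn_iff_integrable_of_support_subset
    ((Function.support_smul_subset_left _ _).trans hfK)).1
    (hf.integrableOn.smul_continuousOn hg.continuousOn hK)

theorem norm_integral_smul_sub_integral_smul_le {X : Type*} [MeasurableSpace X] {μ : Measure X}
    {f : X → ℂ} {g₁ g₂ : X → E} {s : Set X} {B : ℝ} (hf : Integrable f μ)
    (hg₁ : Integrable (fun x => f x • g₁ x) μ) (hg₂ : Integrable (fun x => f x • g₂ x) μ)
    (hfs : ∀ x ∉ s, f x = 0) (hB : ∀ x ∈ s, ‖g₁ x - g₂ x‖ ≤ B) :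
    ‖∫ x, f x • g₁ x ∂μ - ∫ x, f x • g₂ x ∂μ‖ ≤ (∫ x, ‖f x‖ ∂μ) * B := by
  rw [← integral_sub hg₁ hg₂, ← integral_mul_const]
  refine norm_integral_le_of_norm_le (hf.norm.mul_const B) (ae_of_all _ fun x => ?_)
  rw [← smul_sub, norm_smul]
  by_cases hx : x ∈ s
  · exact mul_le_mul_of_nonneg_left (hB x hx) (norm_nonneg _)
  · simp [hfs x hx]

theorem exists_tendsto_tendsto_integral_smul [CompleteSpace E] {X : Type*} [MeasurableSpace X]
    {μ : Measure X} {f : X → ℂ} {s : Set X} {F : ℤ → ℤ → X → E} {a : E} {ε : ℤ → ℝ} {m k : ℤ}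
    (hf : Integrable f μ) (hfs : ∀ x ∉ s, f x = 0)
    (hF : ∀ M L, m ≤ M → Integrable (fun x => f x • F M L x) μ) (hmk : m ≤ k)
    (hε : Tendsto ε atTop (𝓝 0))
    (hFF : ∀ M, m ≤ M → ∀ L L', M + k ≤ L → M + k ≤ L' → ∀ x ∈ s,
      ‖F M L x - F M L' x‖ ≤ ε (L - M) + ε (L' - M))
    (hFa : ∀ M, k ≤ M → ∀ L, M + k ≤ L → ∀ x ∈ s, ‖F M L x - a‖ ≤ ε (L - M) + ε M) :
    ∃ g : ℤ → E, (∀ M, m ≤ M → Tendsto (fun L => ∫ x, f x • F M L x ∂μ) atTop (𝓝 (g M))) ∧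
      Tendsto g atTop (𝓝 ((∫ x, f x ∂μ) • a)) := by
  refine exists_tendsto_tendsto_of_norm_sub_le (k := k) (ε := fun d => (∫ x, ‖f x‖ ∂μ) * ε d)
    (by simpa using hε.const_mul (∫ x, ‖f x‖ ∂μ)) (fun M hM L L' hL hL' => ?_)
    (fun M hM L hL => ?_)
  · exact (norm_integral_smul_sub_integral_smul_le hf (hF M L hM) (hF M L' hM) hfs
      (hFF M hM L L' hL hL')).trans_eq (mul_add _ _ _)
  · rw [← integral_smul_const]
    exact (norm_integral_smul_sub_integral_smul_le hf (hF M L (hmk.trans hM))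
      (hf.smul_const a) hfs (hFa M hM L hL)).trans_eq (mul_add _ _ _)

end Analysis

section Flow

variable {A : Type*} [NormedRing A] {F : Type*} [FunLike F A A]

structure IsIsometricFlow (α : ℝ → F) : Prop where
  apply_zero : ∀ a, α 0 a = a
  apply_add : ∀ s t a, α (s + t) a = α s (α t a)
  norm_apply : ∀ t a, ‖α t a‖ = ‖a‖

namespace IsIsometricFlow

variable {α : ℝ → F}

theorem apply_apply_neg (hα : IsIsometricFlow α) (s : ℝ) (a : A) : α s (α (-s) a) = a := by
  rw [← hα.apply_add, add_neg_cancel, hα.apply_zero]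

theorem lie_apply [RingHomClass F A A] (hα : IsIsometricFlow α) (s : ℝ) (a b : A) :
    ⁅a, α s b⁆ = α s ⁅α (-s) a, b⁆ := by
  rw [Ring.lie_def, Ring.lie_def, map_sub, map_mul, map_mul, hα.apply_apply_neg]

end IsIsometricFlow

variable [NormedAlgebra ℝ A] {f : ℝ → A} {f' : A} {x : ℝ}

theorem HasDerivAt.const_lie (a : A) (hf : HasDerivAt f f' x) :
    HasDerivAt (fun y => ⁅a, f y⁆) ⁅a, f'⁆ x := by
  simp only [Ring.lie_def]
  exact (hf.const_mul a).sub (hf.mul_const a)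

theorem HasDerivAt.lie_const (a : A) (hf : HasDerivAt f f' x) :
    HasDerivAt (fun y => ⁅f y, a⁆) ⁅f', a⁆ x := by
  simp only [Ring.lie_def]
  exact (hf.mul_const a).sub (hf.const_mul a)

/-- Two mean value estimates: `u ↦ ⁅α (-u) N, J⁆` vanishes at `0` and moves at speed `≤ ε`, and
`⁅N, α s J⁆ = α s ⁅α (-s) N, J⁆` is the derivative of `s ↦ ⁅N, α s H⁆`. -/
theorem IsIsometricFlow.norm_lie_apply_sub_le [RingHomClass F A A] {α : ℝ → F}
    (hα : IsIsometricFlow α) {N D H J : A} {T ε t : ℝ}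
    (hN : ∀ s, HasDerivAt (fun s => α s N) (α s D) s)
    (hH : ∀ s, HasDerivAt (fun s => α s H) (α s J) s) (hNJ : ⁅N, J⁆ = 0)
    (hDJ : ∀ u, |u| ≤ T → ‖⁅α u D, J⁆‖ ≤ ε) (ht : |t| ≤ T) :
    ‖⁅N, α t H⁆ - ⁅N, H⁆‖ ≤ ε * T ^ 2 := by
  have hT : 0 ≤ T := (abs_nonneg t).trans ht
  have hε : 0 ≤ ε := (norm_nonneg _).trans (hDJ 0 (by simpa using hT))
  have hNJs (s : ℝ) (hs : |s| ≤ T) : ‖⁅N, α s J⁆‖ ≤ ε * T := by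
    have hG (u : ℝ) : HasDerivAt (fun u => ⁅α (-u) N, J⁆) (-⁅α (-u) D, J⁆) u := by
      -- the commutator lemmas of the Lie library need the Lie ring structure of `A`,
      -- which is not an instance
      let _ : LieRing A := LieRing.ofAssociativeRing
      simpa using ((hN (-u)).scomp u (hasDerivAt_neg u)).lie_const J
    have := norm_sub_le_of_hasDerivAt_of_abs_le hG
      (fun u hu => by rw [norm_neg]; exact hDJ (-u) (by rwa [abs_neg])) hs
    rw [neg_zero, hα.apply_zero, hNJ, sub_zero] at this
    rw [hα.lie_apply, hα.norm_apply]
    exact this.trans (mul_le_mul_of_nonneg_left hs hε)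
  have := norm_sub_le_of_hasDerivAt_of_abs_le (fun s => (hH s).const_lie N) hNJs ht
  rw [hα.apply_zero] at this
  calc _ ≤ ε * T * |t| := this
    _ ≤ ε * T * T := by gcongr
    _ = ε * T ^ 2 := by ring

end Flow

section Chain

variable {A : Type*} [Ring A]

noncomputable def blockCharge (n : ℤ → A) (L : ℤ) : A := ∑ x ∈ Finset.Icc (-L) 0, n x

/-- `H_{[-M,M+1]}`: the term `h y` couples the sites `y` and `y + 1`. -/
noncomputable def blockEnergy (h : ℤ → A) (M : ℤ) : A := ∑ y ∈ Finset.Icc (-M) M, h y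

structure IsLocalChargeConserving (n h : ℤ → A) : Prop where
  lie_eq_zero : ∀ x y, x ≠ y → x ≠ y + 1 → ⁅n x, h y⁆ = 0
  lie_add_eq_zero : ∀ y, ⁅n y + n (y + 1), h y⁆ = 0

namespace IsLocalChargeConserving

variable {n h : ℤ → A}

theorem lie_blockCharge_eq_zero (hnh : IsLocalChargeConserving n h) {L y : ℤ} (hy : y ≠ 0)
    (hyL : y ≠ -L - 1) : ⁅blockCharge n L, h y⁆ = 0 := by
  let _ : LieRing A := LieRing.ofAssociativeRing
  rw [blockCharge, sum_lie]
  by_cases hyI : -L ≤ y ∧ y ≤ -1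
  · have hsub : {y, y + 1} ⊆ Finset.Icc (-L) 0 := by
      intro x hx
      simp only [Finset.mem_insert, Finset.mem_singleton] at hx
      simp only [Finset.mem_Icc]
      omega
    rw [← Finset.sum_subset hsub fun x _ hx => hnh.lie_eq_zero x y (by simp_all) (by simp_all),
      Finset.sum_pair (by omega), ← add_lie, hnh.lie_add_eq_zero]
  · refine Finset.sum_eq_zero fun x hx => ?_
    rw [Finset.mem_Icc] at hx
    exact hnh.lie_eq_zero x y (by omega) (by omega)

theorem lie_blockCharge_blockEnergy (hnh : IsLocalChargeConserving n h) {L M : ℤ} (hM : 0 ≤ M)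
    (hML : M ≤ L) : ⁅blockCharge n L, blockEnergy h M⁆ = ⁅n 0, h 0⁆ := by
  let _ : LieRing A := LieRing.ofAssociativeRing
  rw [blockEnergy, lie_sum, Finset.sum_eq_single_of_mem 0 (by simpa using hM)]
  · rw [blockCharge, sum_lie, Finset.sum_eq_single_of_mem 0 (by simp; omega)]
    intro x hx hx0
    exact hnh.lie_eq_zero x 0 hx0 (by simp at hx; omega)
  · intro y hy hy0
    exact hnh.lie_blockCharge_eq_zero hy0 (by simp at hy; omega)

end IsLocalChargeConserving

variable [Algebra ℂ A]

def chargeCurrent (n h : ℤ → A) (z : ℤ) : A := Complex.I • ⁅n z, h z⁆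

def energyCurrent (h : ℤ → A) (x : ℤ) : A := Complex.I • ⁅h (x - 1), h x⁆

namespace IsLocalChargeConserving

variable {n h : ℤ → A}

theorem lie_blockCharge_energyCurrent (hnh : IsLocalChargeConserving n h) {L x : ℤ}
    (hx : x ≠ 0 ∧ x ≠ 1) (hxL : x ≠ -L ∧ x ≠ -L - 1) :
    ⁅blockCharge n L, energyCurrent h x⁆ = 0 := by
  let _ : LieRing A := LieRing.ofAssociativeRing
  rw [energyCurrent, lie_smul, leibniz_lie, hnh.lie_blockCharge_eq_zero (by omega) (by omega),
    hnh.lie_blockCharge_eq_zero hx.1 hxL.2, zero_lie, lie_zero, add_zero, smul_zero]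

theorem lie_blockCharge_energyCurrent_sub (hnh : IsLocalChargeConserving n h) {L M : ℤ}
    (hM : 1 ≤ M) (hML : M < L) :
    ⁅blockCharge n L, energyCurrent h (-M) - energyCurrent h (M + 1)⁆ = 0 := by
  let _ : LieRing A := LieRing.ofAssociativeRing
  rw [lie_sub, hnh.lie_blockCharge_energyCurrent (by omega) (by omega),
    hnh.lie_blockCharge_energyCurrent (by omega) (by omega), sub_zero]

end IsLocalChargeConserving

end Chain

section LiebRobinson

variable {A : Type*} [NormedRing A] [NormedAlgebra ℂ A] {F : Type*} [FunLike F A A]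
  {α : ℝ → F} {n h : ℤ → A}

theorem norm_lie_chargeCurrent_energyCurrent_le {C V T s : ℝ} (hC : 0 ≤ C) (hV : 0 ≤ V)
    (hLR : ∀ (s : ℝ) (x z : ℤ), 6 ≤ |z - x| →
      ‖⁅α s (chargeCurrent n h z), energyCurrent h x⁆‖
        ≤ C * Real.exp (-(((|z - x| : ℤ) : ℝ) - 5)) * Real.exp (2 * V * |s|))
    (hs : |s| ≤ T) {x z : ℤ} (hzx : 6 ≤ |z - x|) :
    ‖⁅α s (chargeCurrent n h z), energyCurrent h x⁆‖
      ≤ C * Real.exp (2 * V * T + 5) * Real.exp (-((|z - x| : ℤ) : ℝ)) := by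
  refine (hLR s x z hzx).trans ?_
  rw [mul_assoc C, mul_assoc C, ← Real.exp_add, ← Real.exp_add]
  gcongr ?_ * Real.exp ?_
  nlinarith [abs_nonneg s]

theorem norm_lie_chargeCurrent_energyCurrent_sub_le {K s : ℝ} (hK0 : 0 ≤ K)
    (hK : ∀ x z : ℤ, 6 ≤ |z - x| →
      ‖⁅α s (chargeCurrent n h z), energyCurrent h x⁆‖ ≤ K * Real.exp (-((|z - x| : ℤ) : ℝ)))
    {M z d : ℤ} (hd : 6 ≤ d) (hdl : d ≤ |z + M|) (hdr : d ≤ |z - (M + 1)|) :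
    ‖⁅α s (chargeCurrent n h z), energyCurrent h (-M) - energyCurrent h (M + 1)⁆‖
      ≤ 2 * K * Real.exp (-(d : ℝ)) := by
  have hx (x : ℤ) (hx : d ≤ |z - x|) :
      ‖⁅α s (chargeCurrent n h z), energyCurrent h x⁆‖ ≤ K * Real.exp (-(d : ℝ)) :=
    (hK x z (hd.trans hx)).trans (by gcongr)
  let _ : LieRing A := LieRing.ofAssociativeRing
  rw [lie_sub, two_mul, add_mul]
  exact (norm_sub_le _ _).trans
    (add_le_add (hx (-M) (by rwa [sub_neg_eq_add])) (hx (M + 1) hdr))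

variable [RingHomClass F A A]

theorem IsIsometricFlow.norm_lie_apply_blockEnergy_sub_le (hα : IsIsometricFlow α)
    {M : ℤ} {K T t : ℝ} (hK0 : 0 ≤ K)
    (hK : ∀ s, |s| ≤ T → ∀ x z : ℤ, 6 ≤ |z - x| →
      ‖⁅α s (chargeCurrent n h z), energyCurrent h x⁆‖ ≤ K * Real.exp (-((|z - x| : ℤ) : ℝ)))
    (hH : ∀ s, HasDerivAt (fun s => α s (blockEnergy h M))
      (α s (energyCurrent h (-M) - energyCurrent h (M + 1))) s)
    {N : A} {z₁ z₂ d₁ d₂ : ℤ}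
    (hN : ∀ s, HasDerivAt (fun s => α s N)
      (α s (chargeCurrent n h z₁ - chargeCurrent n h z₂)) s)
    (hNJ : ⁅N, energyCurrent h (-M) - energyCurrent h (M + 1)⁆ = 0)
    (hd₁ : 6 ≤ d₁) (hd₁l : d₁ ≤ |z₁ + M|) (hd₁r : d₁ ≤ |z₁ - (M + 1)|)
    (hd₂ : 6 ≤ d₂) (hd₂l : d₂ ≤ |z₂ + M|) (hd₂r : d₂ ≤ |z₂ - (M + 1)|) (ht : |t| ≤ T) :
    ‖⁅N, α t (blockEnergy h M)⁆ - ⁅N, blockEnergy h M⁆‖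
      ≤ 2 * K * Real.exp (-(d₁ : ℝ)) * T ^ 2 + 2 * K * Real.exp (-(d₂ : ℝ)) * T ^ 2 := by
  refine (hα.norm_lie_apply_sub_le hN hH hNJ (fun u hu => ?_) ht).trans_eq (add_mul _ _ _)
  let _ : LieRing A := LieRing.ofAssociativeRing
  rw [map_sub, sub_lie]
  exact (norm_sub_le _ _).trans (add_le_add
    (norm_lie_chargeCurrent_energyCurrent_sub_le hK0 (hK u hu) hd₁ hd₁l hd₁r)
    (norm_lie_chargeCurrent_energyCurrent_sub_le hK0 (hK u hu) hd₂ hd₂l hd₂r))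

theorem IsIsometricFlow.norm_smul_lie_blockCharge_sub_chargeCurrent_le (hα : IsIsometricFlow α)
    (hnh : IsLocalChargeConserving n h) {L M : ℤ} {K T t : ℝ} (hK0 : 0 ≤ K)
    (hK : ∀ s, |s| ≤ T → ∀ x z : ℤ, 6 ≤ |z - x| →
      ‖⁅α s (chargeCurrent n h z), energyCurrent h x⁆‖ ≤ K * Real.exp (-((|z - x| : ℤ) : ℝ)))
    (hH : ∀ s, HasDerivAt (fun s => α s (blockEnergy h M))
      (α s (energyCurrent h (-M) - energyCurrent h (M + 1))) s)
    (hN : ∀ s, HasDerivAt (fun s => α s (blockCharge n L))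
      (α s (chargeCurrent n h (-L - 1) - chargeCurrent n h 0)) s)
    (hM : 6 ≤ M) (hML : M + 6 ≤ L) (ht : |t| ≤ T) :
    ‖Complex.I • ⁅blockCharge n L, α t (blockEnergy h M)⁆ - chargeCurrent n h 0‖
      ≤ 2 * K * Real.exp (-((L - M : ℤ) : ℝ)) * T ^ 2 + 2 * K * Real.exp (-(M : ℝ)) * T ^ 2 := by
  rw [chargeCurrent, ← smul_sub, norm_smul, Complex.norm_I, one_mul,
    ← hnh.lie_blockCharge_blockEnergy (L := L) (M := M) (by omega) (by omega)]
  exact hα.norm_lie_apply_blockEnergy_sub_le (d₁ := L - M) (d₂ := M) hK0 hK hH hN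
    (hnh.lie_blockCharge_energyCurrent_sub (by omega) (by omega)) (by omega)
    (le_abs.2 (by omega)) (le_abs.2 (by omega)) hM (le_abs.2 (by omega)) (le_abs.2 (by omega)) ht

theorem IsIsometricFlow.norm_smul_lie_blockCharge_sub_smul_lie_blockCharge_le
    (hα : IsIsometricFlow α) (hnh : IsLocalChargeConserving n h) {L L' M : ℤ} {K T t : ℝ}
    (hK0 : 0 ≤ K)
    (hK : ∀ s, |s| ≤ T → ∀ x z : ℤ, 6 ≤ |z - x| →
      ‖⁅α s (chargeCurrent n h z), energyCurrent h x⁆‖ ≤ K * Real.exp (-((|z - x| : ℤ) : ℝ)))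
    (hH : ∀ s, HasDerivAt (fun s => α s (blockEnergy h M))
      (α s (energyCurrent h (-M) - energyCurrent h (M + 1))) s)
    (hN : ∀ s, HasDerivAt (fun s => α s (blockCharge n L))
      (α s (chargeCurrent n h (-L - 1) - chargeCurrent n h 0)) s)
    (hN' : ∀ s, HasDerivAt (fun s => α s (blockCharge n L'))
      (α s (chargeCurrent n h (-L' - 1) - chargeCurrent n h 0)) s)
    (hM : 1 ≤ M) (hML : M + 6 ≤ L) (hML' : M + 6 ≤ L') (ht : |t| ≤ T) :
    ‖Complex.I • ⁅blockCharge n L, α t (blockEnergy h M)⁆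
        - Complex.I • ⁅blockCharge n L', α t (blockEnergy h M)⁆‖
      ≤ 2 * K * Real.exp (-((L - M : ℤ) : ℝ)) * T ^ 2
        + 2 * K * Real.exp (-((L' - M : ℤ) : ℝ)) * T ^ 2 := by
  have hNN' (s : ℝ) : HasDerivAt (fun s => α s (blockCharge n L - blockCharge n L'))
      (α s (chargeCurrent n h (-L - 1) - chargeCurrent n h (-L' - 1))) s := by
    have h := (hN s).sub (hN' s)
    rw [map_sub, map_sub, sub_sub_sub_cancel_right] at h
    simp only [map_sub]
    exact h
  let _ : LieRing A := LieRing.ofAssociativeRing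
  have hNN'H : ⁅blockCharge n L - blockCharge n L', blockEnergy h M⁆ = 0 := by
    rw [sub_lie, hnh.lie_blockCharge_blockEnergy (by omega) (by omega),
      hnh.lie_blockCharge_blockEnergy (by omega) (by omega), sub_self]
  have hNN'J :
      ⁅blockCharge n L - blockCharge n L', energyCurrent h (-M) - energyCurrent h (M + 1)⁆ = 0 := by
    rw [sub_lie, hnh.lie_blockCharge_energyCurrent_sub (by omega) (by omega),
      hnh.lie_blockCharge_energyCurrent_sub (by omega) (by omega), sub_self]
  rw [← smul_sub, norm_smul, Complex.norm_I, one_mul, ← sub_lie]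
  simpa only [hNN'H, sub_zero] using
    hα.norm_lie_apply_blockEnergy_sub_le (d₁ := L - M) (d₂ := L' - M) hK0 hK hH hNN' hNN'J
      (by omega) (le_abs.2 (by omega)) (le_abs.2 (by omega))
      (by omega) (le_abs.2 (by omega)) (le_abs.2 (by omega)) ht

end LiebRobinson

theorem lemma_two_nonvanishing_current_general
    (A : Type*) [NormedRing A] [StarRing A] [NormedAlgebra ℂ A]
    [CompleteSpace A]
    (n h : ℤ → A)
    -- locality of charge and interaction
    (hloc1 : ∀ x y : ℤ, x ≠ y → x ≠ y + 1 → n x * h y - h y * n x = 0)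
    -- local charge conservation
    (hcons : ∀ y : ℤ, (n y + n (y + 1)) * h y - h y * (n y + n (y + 1)) = 0)
    -- one-parameter group of isometric *-automorphisms
    (α : ℝ → A ≃⋆ₐ[ℂ] A)
    (hα0 : ∀ a : A, α 0 a = a)
    (hαadd : ∀ (s t : ℝ) (a : A), α (s + t) a = α s (α t a))
    (hαiso : ∀ (t : ℝ) (a : A), ‖α t a‖ = ‖a‖)
    -- (i) derivative of t ↦ α_t(H_{[-M,M+1]}) is α_t(J_{-M} - J_{M+1})
    (hdiffH : ∀ M : ℤ, 1 ≤ M → ∀ t : ℝ,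
      HasDerivAt (fun s : ℝ => α s (∑ y ∈ Finset.Icc (-M) M, h y))
        (α t (Complex.I • (h (-M - 1) * h (-M) - h (-M) * h (-M - 1))
          - Complex.I • (h M * h (M + 1) - h (M + 1) * h M))) t)
    -- (ii) derivative of t ↦ α_t(N_{[-L,0]}) is α_t(j_{-L-1,-L} - j_{0,1})
    (hdiffN : ∀ L : ℤ, 1 ≤ L → ∀ t : ℝ,
      HasDerivAt (fun s : ℝ => α s (∑ x ∈ Finset.Icc (-L) 0, n x))
        (α t (Complex.I • (n (-L - 1) * h (-L - 1) - h (-L - 1) * n (-L - 1))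
          - Complex.I • (n 0 * h 0 - h 0 * n 0))) t)
    -- (iii) Lieb-Robinson bounds
    (hLR : ∃ C > (0 : ℝ), ∃ V > (0 : ℝ), ∀ (s : ℝ) (x z : ℤ),
      ((5 : ℤ) ≤ |z - x| →
        ‖n z * α s (Complex.I • (h (x - 1) * h x - h x * h (x - 1)))
            - α s (Complex.I • (h (x - 1) * h x - h x * h (x - 1))) * n z‖
          ≤ C * Real.exp (-(((|z - x| : ℤ) : ℝ) - 4)) * Real.exp (2 * V * |s|)) ∧
      ((6 : ℤ) ≤ |z - x| →
        ‖α s (Complex.I • (n z * h z - h z * n z))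
              * (Complex.I • (h (x - 1) * h x - h x * h (x - 1)))
            - (Complex.I • (h (x - 1) * h x - h x * h (x - 1)))
              * α s (Complex.I • (n z * h z - h z * n z))‖
          ≤ C * Real.exp (-(((|z - x| : ℤ) : ℝ) - 5)) * Real.exp (2 * V * |s|))) :
    ∀ T > (0 : ℝ), ∀ f : ℝ → ℂ, MemLp f 2 (volume : Measure ℝ) →
      Function.support f ⊆ Set.Icc (-T) T →
      (∀ M L : ℤ, 1 ≤ M → 1 ≤ L →
        Integrable (fun t : ℝ => f t • (Complex.I •
          ((∑ x ∈ Finset.Icc (-L) 0, n x) * α t (∑ y ∈ Finset.Icc (-M) M, h y)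
            - α t (∑ y ∈ Finset.Icc (-M) M, h y) * ∑ x ∈ Finset.Icc (-L) 0, n x)))
          (volume : Measure ℝ)) ∧
      ∃ g : ℤ → A,
        (∀ M : ℤ, 1 ≤ M →
          Tendsto (fun L : ℤ => ∫ t : ℝ, f t • (Complex.I •
            ((∑ x ∈ Finset.Icc (-L) 0, n x) * α t (∑ y ∈ Finset.Icc (-M) M, h y)
              - α t (∑ y ∈ Finset.Icc (-M) M, h y) * ∑ x ∈ Finset.Icc (-L) 0, n x)))
            atTop (nhds (g M))) ∧
        Tendsto g atTop (nhds
          (((Real.sqrt (2 * Real.pi) : ℂ)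
              * ((1 / (Real.sqrt (2 * Real.pi) : ℂ))
                * ∫ t : ℝ, f t * Complex.exp (Complex.I * (0 : ℝ) * t)))
            • (Complex.I • (n 0 * h 0 - h 0 * n 0)))) := by
  intro T _ f hf hsupp
  obtain ⟨C, hC, V, hV, hLR⟩ := hLR
  have hα : IsIsometricFlow α := ⟨hα0, hαadd, hαiso⟩
  have hnh : IsLocalChargeConserving n h := ⟨hloc1, hcons⟩
  have hH (M : ℤ) (hM : 1 ≤ M) (t : ℝ) : HasDerivAt (fun s => α s (blockEnergy h M))
      (α t (energyCurrent h (-M) - energyCurrent h (M + 1))) t := by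
    rw [energyCurrent, energyCurrent, add_sub_cancel_right]
    exact hdiffH M hM t
  set K := C * Real.exp (2 * V * T + 5)
  have hK0 : 0 ≤ K := by positivity
  have hK (s : ℝ) (hs : |s| ≤ T) (x z : ℤ) (hzx : 6 ≤ |z - x|) :=
    norm_lie_chargeCurrent_energyCurrent_le (n := n) (h := h) hC.le hV.le
      (fun s x z => (hLR s x z).2) hs hzx
  have hfi : Integrable f := hf.integrable_of_support_subset one_le_two (by simp) hsupp
  have hc (M L : ℤ) (hM : 1 ≤ M) :
      Integrable fun t => f t • Complex.I • ⁅blockCharge n L, α t (blockEnergy h M)⁆ :=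
    hfi.smul_continuous_of_support_subset (continuous_iff_continuousAt.2 fun t =>
      (((hH M hM t).const_lie _).const_smul Complex.I).continuousAt) isCompact_Icc hsupp
  obtain ⟨g, hg, hga⟩ := exists_tendsto_tendsto_integral_smul (m := 1) (k := 6)
    (ε := fun d => 2 * K * Real.exp (-(d : ℝ)) * T ^ 2) hfi
    (fun t ht => Function.notMem_support.1 fun h => ht (hsupp h)) hc (by norm_num)
    (by simpa using (((Real.tendsto_exp_neg_atTop_nhds_zero.comp
      tendsto_intCast_atTop_atTop).const_mul (2 * K)).mul_const (T ^ 2)))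
    (fun M hM L L' hL hL' t ht =>
      hα.norm_smul_lie_blockCharge_sub_smul_lie_blockCharge_le hnh hK0 hK (hH M hM)
        (hdiffN L (by omega)) (hdiffN L' (by omega)) hM hL hL' (abs_le.2 ht))
    (fun M hM L hL t ht => hα.norm_smul_lie_blockCharge_sub_chargeCurrent_le hnh hK0 hK
      (hH M (by omega)) (hdiffN L (by omega)) hM hL (abs_le.2 ht))
  refine ⟨fun M L hM _ => hc M L hM, g, hg, ?_⟩
  have hsqrt : (Real.sqrt (2 * Real.pi) : ℂ) ≠ 0 := by
    exact_mod_cast (Real.sqrt_pos.2 (by positivity)).ne'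
  have hfourier : (Real.sqrt (2 * Real.pi) : ℂ) * ((1 / (Real.sqrt (2 * Real.pi) : ℂ))
      * ∫ t : ℝ, f t * Complex.exp (Complex.I * (0 : ℝ) * t)) = ∫ t, f t := by
    field_simp
    simp
  rw [hfourier]
  exact hga

/-- Lemma 2: under locality, charge conservation, the
differentiability hypotheses (i)-(ii) and the Lieb-Robinson bounds (iii), for
every `T > 0` and square-integrable `f` supported in `[-T,T]`, the integrals
`∫ f(t) · i[N_{[-L,0]}, α_t(H_{[-M,M+1]})] dt` exist, and the iterated limit
`lim_{M→∞} lim_{L→∞}` of them exists in norm and equals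
`√(2π) · f̂(0) · j_{0,1}`. -/
theorem lemma_two_nonvanishing_current
    (A : Type*) [NormedRing A] [StarRing A] [CStarRing A] [NormedAlgebra ℂ A]
    [CompleteSpace A]
    (n h : ℤ → A)
    -- locality of charge and interaction
    (hloc1 : ∀ x y : ℤ, x ≠ y → x ≠ y + 1 → n x * h y - h y * n x = 0)
    (hloc2 : ∀ x y : ℤ, 2 ≤ |x - y| → h x * h y - h y * h x = 0)
    -- local charge conservation
    (hcons : ∀ y : ℤ, (n y + n (y + 1)) * h y - h y * (n y + n (y + 1)) = 0)
    -- one-parameter group of isometric *-automorphisms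
    (α : ℝ → A ≃⋆ₐ[ℂ] A)
    (hα0 : ∀ a : A, α 0 a = a)
    (hαadd : ∀ (s t : ℝ) (a : A), α (s + t) a = α s (α t a))
    (hαiso : ∀ (t : ℝ) (a : A), ‖α t a‖ = ‖a‖)
    -- (i) derivative of t ↦ α_t(H_{[-M,M+1]}) is α_t(J_{-M} - J_{M+1})
    (hdiffH : ∀ M : ℤ, 1 ≤ M → ∀ t : ℝ,
      HasDerivAt (fun s : ℝ => α s (∑ y ∈ Finset.Icc (-M) M, h y))
        (α t (Complex.I • (h (-M - 1) * h (-M) - h (-M) * h (-M - 1))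
          - Complex.I • (h M * h (M + 1) - h (M + 1) * h M))) t)
    -- (ii) derivative of t ↦ α_t(N_{[-L,0]}) is α_t(j_{-L-1,-L} - j_{0,1})
    (hdiffN : ∀ L : ℤ, 1 ≤ L → ∀ t : ℝ,
      HasDerivAt (fun s : ℝ => α s (∑ x ∈ Finset.Icc (-L) 0, n x))
        (α t (Complex.I • (n (-L - 1) * h (-L - 1) - h (-L - 1) * n (-L - 1))
          - Complex.I • (n 0 * h 0 - h 0 * n 0))) t)
    -- (iii) Lieb-Robinson bounds
    (hLR : ∃ C > (0 : ℝ), ∃ V > (0 : ℝ), ∀ (s : ℝ) (x z : ℤ),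
      ((5 : ℤ) ≤ |z - x| →
        ‖n z * α s (Complex.I • (h (x - 1) * h x - h x * h (x - 1)))
            - α s (Complex.I • (h (x - 1) * h x - h x * h (x - 1))) * n z‖
          ≤ C * Real.exp (-(((|z - x| : ℤ) : ℝ) - 4)) * Real.exp (2 * V * |s|)) ∧
      ((6 : ℤ) ≤ |z - x| →
        ‖α s (Complex.I • (n z * h z - h z * n z))
              * (Complex.I • (h (x - 1) * h x - h x * h (x - 1)))
            - (Complex.I • (h (x - 1) * h x - h x * h (x - 1)))
              * α s (Complex.I • (n z * h z - h z * n z))‖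
          ≤ C * Real.exp (-(((|z - x| : ℤ) : ℝ) - 5)) * Real.exp (2 * V * |s|))) :
    ∀ T > (0 : ℝ), ∀ f : ℝ → ℂ, MemLp f 2 (volume : Measure ℝ) →
      Function.support f ⊆ Set.Icc (-T) T →
      (∀ M L : ℤ, 1 ≤ M → 1 ≤ L →
        Integrable (fun t : ℝ => f t • (Complex.I •
          ((∑ x ∈ Finset.Icc (-L) 0, n x) * α t (∑ y ∈ Finset.Icc (-M) M, h y)
            - α t (∑ y ∈ Finset.Icc (-M) M, h y) * ∑ x ∈ Finset.Icc (-L) 0, n x)))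
          (volume : Measure ℝ)) ∧
      ∃ g : ℤ → A,
        (∀ M : ℤ, 1 ≤ M →
          Tendsto (fun L : ℤ => ∫ t : ℝ, f t • (Complex.I •
            ((∑ x ∈ Finset.Icc (-L) 0, n x) * α t (∑ y ∈ Finset.Icc (-M) M, h y)
              - α t (∑ y ∈ Finset.Icc (-M) M, h y) * ∑ x ∈ Finset.Icc (-L) 0, n x)))
            atTop (nhds (g M))) ∧
        Tendsto g atTop (nhds
          (((Real.sqrt (2 * Real.pi) : ℂ)
              * ((1 / (Real.sqrt (2 * Real.pi) : ℂ))
                * ∫ t : ℝ, f t * Complex.exp (Complex.I * (0 : ℝ) * t)))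
            • (Complex.I • (n 0 * h 0 - h 0 * n 0)))) :=
  lemma_two_nonvanishing_current_general A n h hloc1 hcons α hα0 hαadd hαiso hdiffH hdiffN hLR
end

section
/- Assume [N_{[−L,0]}, J_{−M}] = 0, assume hypothesis (ii) (the map t ↦ α_t(N_{[−L,0]}) is differentiable with derivative α_t(j_{−L−1,−L} − j_{0,1})), and assume the Lieb–Robinson bound: there exist constants C > 0, V > 0 such that ‖[α_u(j_{z,z+1}), J_{−M}]‖ ≤ C e^{−(|z+M|−5)} e^{2V|u|} for all u ∈ ℝ and integers z with |z + M| ≥ 6. Then for all integers M ≥ 6 and L ≥ M + 6 and every s ∈ ℝ, ‖[α_{−s}(N_{[−L,0]}), J_{−M}]‖ ≤ C e^{5} (e^{−M} + e^{−(L−M)}) (e^{2V|s|} − 1)/(2V). -/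
open Real Set

section GronwallExp

variable {E : Type*} [NormedAddCommGroup E] [NormedSpace ℝ E] {f f' : ℝ → E} {K c : ℝ}

/-- `K (e^{ct} - 1) / c` solves the comparison problem `B' = K e^{ct}`, `B 0 = 0`. -/
theorem norm_le_of_norm_deriv_le_mul_exp (hc : 0 < c) (hf : ∀ t, HasDerivAt f (f' t) t)
    (hf0 : f 0 = 0) (hf' : ∀ t, 0 ≤ t → ‖f' t‖ ≤ K * exp (c * t)) {s : ℝ} (hs : 0 ≤ s) :
    ‖f s‖ ≤ K * (exp (c * s) - 1) / c := by
  have hB : ∀ t, HasDerivAt (fun t => K * (exp (c * t) - 1) / c) (K * exp (c * t)) t := by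
    intro t
    refine ((((hasDerivAt_id t).const_mul c).exp.sub_const 1).const_mul K).div_const c
      |>.congr_deriv ?_
    change K * (exp (c * t) * (c * 1)) / c = K * exp (c * t)
    field_simp
  exact image_norm_le_of_norm_deriv_right_le_deriv_boundary
    (fun t _ => (hf t).continuousAt.continuousWithinAt) (fun t _ => (hf t).hasDerivWithinAt)
    (by simp [hf0]) hB (fun t ht => hf' t ht.1) (right_mem_Icc.2 hs)

theorem norm_le_of_norm_deriv_le_mul_exp_abs (hc : 0 < c) (hf : ∀ t, HasDerivAt f (f' t) t)
    (hf0 : f 0 = 0) (hf' : ∀ t, ‖f' t‖ ≤ K * exp (c * |t|)) (s : ℝ) :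
    ‖f s‖ ≤ K * (exp (c * |s|) - 1) / c := by
  rcases le_or_gt 0 s with hs | hs
  · rw [abs_of_nonneg hs]
    exact norm_le_of_norm_deriv_le_mul_exp hc hf hf0
      (fun t ht => by simpa [abs_of_nonneg ht] using hf' t) hs
  · have hg : ∀ t, HasDerivAt (fun t => f (-t)) (-f' (-t)) t := fun t => by
      simpa [Function.comp_def] using (hf (-t)).scomp t (hasDerivAt_neg t)
    have hg' : ∀ t, 0 ≤ t → ‖-f' (-t)‖ ≤ K * exp (c * t) := fun t ht => by
      simpa [abs_of_nonneg ht] using hf' (-t)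
    simpa [abs_of_neg hs] using
      norm_le_of_norm_deriv_le_mul_exp hc hg (by simpa using hf0) hg' (neg_nonneg.2 hs.le)

end GronwallExp

theorem norm_commutator_sub_le {R : Type*} [NonUnitalNormedRing R] (a b x : R) :
    ‖(a - b) * x - x * (a - b)‖ ≤ ‖a * x - x * a‖ + ‖b * x - x * b‖ := by
  have : (a - b) * x - x * (a - b) = (a * x - x * a) - (b * x - x * b) := by noncomm_ring
  exact this ▸ norm_sub_le _ _

theorem exp_neg_sub_five_le {x m : ℝ} (h : m ≤ x) : exp (-(x - 5)) ≤ exp 5 * exp (-m) := by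
  rw [← exp_add]
  exact exp_le_exp.2 (by linarith)

theorem left_boundary_current_bound_general
    (A : Type*) [NormedRing A] [StarRing A] [NormedAlgebra ℂ A]
    (n h : ℤ → A)
    (α : ℝ → A ≃⋆ₐ[ℂ] A)
    (hα0 : ∀ a : A, α 0 a = a)
    (C V : ℝ) (hC : 0 < C) (hV : 0 < V)
    (M L : ℤ) (hM : 6 ≤ M) (hL : M + 6 ≤ L)
    -- [N_{[-L,0]}, J_{-M}] = 0
    (hcomm : (∑ x ∈ Finset.Icc (-L) 0, n x)
          * (Complex.I • (h (-M - 1) * h (-M) - h (-M) * h (-M - 1)))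
        - (Complex.I • (h (-M - 1) * h (-M) - h (-M) * h (-M - 1)))
          * ∑ x ∈ Finset.Icc (-L) 0, n x = 0)
    -- (ii) derivative of t ↦ α_t(N_{[-L,0]}) is α_t(j_{-L-1,-L} - j_{0,1})
    (hdiffN : ∀ t : ℝ,
      HasDerivAt (fun s : ℝ => α s (∑ x ∈ Finset.Icc (-L) 0, n x))
        (α t (Complex.I • (n (-L - 1) * h (-L - 1) - h (-L - 1) * n (-L - 1))
          - Complex.I • (n 0 * h 0 - h 0 * n 0))) t)
    -- Lieb-Robinson bound for currents against J_{-M}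
    (hLR : ∀ (u : ℝ) (z : ℤ), (6 : ℤ) ≤ |z + M| →
      ‖α u (Complex.I • (n z * h z - h z * n z))
            * (Complex.I • (h (-M - 1) * h (-M) - h (-M) * h (-M - 1)))
          - (Complex.I • (h (-M - 1) * h (-M) - h (-M) * h (-M - 1)))
            * α u (Complex.I • (n z * h z - h z * n z))‖
        ≤ C * Real.exp (-(((|z + M| : ℤ) : ℝ) - 5)) * Real.exp (2 * V * |u|)) :
    ∀ s : ℝ,
      ‖α (-s) (∑ x ∈ Finset.Icc (-L) 0, n x)
            * (Complex.I • (h (-M - 1) * h (-M) - h (-M) * h (-M - 1)))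
          - (Complex.I • (h (-M - 1) * h (-M) - h (-M) * h (-M - 1)))
            * α (-s) (∑ x ∈ Finset.Icc (-L) 0, n x)‖
        ≤ C * Real.exp 5 * (Real.exp (-(M : ℝ)) + Real.exp (-((L : ℝ) - (M : ℝ))))
            * (Real.exp (2 * V * |s|) - 1) / (2 * V) := by
  intro s
  set J : A := Complex.I • (h (-M - 1) * h (-M) - h (-M) * h (-M - 1))
  set jL : A := Complex.I • (n (-L - 1) * h (-L - 1) - h (-L - 1) * n (-L - 1))
  set j0 : A := Complex.I • (n 0 * h 0 - h 0 * n 0)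
  have hderiv := fun t => ((hdiffN t).mul_const J).sub ((hdiffN t).const_mul J)
  have hbound : ∀ t : ℝ, ‖α t (jL - j0) * J - J * α t (jL - j0)‖ ≤
      C * exp 5 * (exp (-(M : ℝ)) + exp (-((L : ℝ) - M))) * exp (2 * V * |t|) := by
    intro t
    have hLRleft := hLR t (-L - 1) (le_abs.2 (Or.inr (by omega)))
    have hLRright := hLR t 0 (le_abs.2 (Or.inl (by omega)))
    have hdistL : (L : ℝ) - M ≤ ((|-L - 1 + M| : ℤ) : ℝ) := by
      exact_mod_cast le_abs.2 (Or.inr (by omega))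
    have hdistM : (M : ℝ) ≤ ((|0 + M| : ℤ) : ℝ) := by
      rw [zero_add]; exact_mod_cast le_abs_self M
    calc _ ≤ _ := map_sub (α t) _ _ ▸ norm_commutator_sub_le _ _ J
      _ ≤ _ := add_le_add hLRleft hLRright
      _ ≤ _ := by
        rw [← add_mul, ← mul_add, mul_assoc C (exp 5)]
        gcongr C * ?_ * _
        linarith [exp_neg_sub_five_le hdistL, exp_neg_sub_five_le hdistM]
  simpa using norm_le_of_norm_deriv_le_mul_exp_abs (by positivity) hderiv
    (by simpa [hα0] using hcomm) hbound (-s)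

/-- assuming `[N_{[-L,0]}, J_{-M}] = 0`, hypothesis (ii)
(differentiability of `t ↦ α_t(N_{[-L,0]})` with derivative
`α_t(j_{-L-1,-L} - j_{0,1})`), and the Lieb-Robinson bound
`‖[α_u(j_{z,z+1}), J_{-M}]‖ ≤ C e^{-(|z+M|-5)} e^{2V|u|}` for `|z+M| ≥ 6`,
one has, for `M ≥ 6` and `L ≥ M + 6` and every `s`,
`‖[α_{-s}(N_{[-L,0]}), J_{-M}]‖ ≤ C e⁵ (e^{-M} + e^{-(L-M)})(e^{2V|s|} - 1)/(2V)`. -/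
theorem left_boundary_current_bound
    (A : Type*) [NormedRing A] [StarRing A] [CStarRing A] [NormedAlgebra ℂ A]
    [CompleteSpace A]
    (n h : ℤ → A)
    (α : ℝ → A ≃⋆ₐ[ℂ] A)
    (hα0 : ∀ a : A, α 0 a = a)
    (hαadd : ∀ (s t : ℝ) (a : A), α (s + t) a = α s (α t a))
    (hαiso : ∀ (t : ℝ) (a : A), ‖α t a‖ = ‖a‖)
    (C V : ℝ) (hC : 0 < C) (hV : 0 < V)
    (M L : ℤ) (hM : 6 ≤ M) (hL : M + 6 ≤ L)
    -- [N_{[-L,0]}, J_{-M}] = 0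
    (hcomm : (∑ x ∈ Finset.Icc (-L) 0, n x)
          * (Complex.I • (h (-M - 1) * h (-M) - h (-M) * h (-M - 1)))
        - (Complex.I • (h (-M - 1) * h (-M) - h (-M) * h (-M - 1)))
          * ∑ x ∈ Finset.Icc (-L) 0, n x = 0)
    -- (ii) derivative of t ↦ α_t(N_{[-L,0]}) is α_t(j_{-L-1,-L} - j_{0,1})
    (hdiffN : ∀ t : ℝ,
      HasDerivAt (fun s : ℝ => α s (∑ x ∈ Finset.Icc (-L) 0, n x))
        (α t (Complex.I • (n (-L - 1) * h (-L - 1) - h (-L - 1) * n (-L - 1))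
          - Complex.I • (n 0 * h 0 - h 0 * n 0))) t)
    -- Lieb-Robinson bound for currents against J_{-M}
    (hLR : ∀ (u : ℝ) (z : ℤ), (6 : ℤ) ≤ |z + M| →
      ‖α u (Complex.I • (n z * h z - h z * n z))
            * (Complex.I • (h (-M - 1) * h (-M) - h (-M) * h (-M - 1)))
          - (Complex.I • (h (-M - 1) * h (-M) - h (-M) * h (-M - 1)))
            * α u (Complex.I • (n z * h z - h z * n z))‖
        ≤ C * Real.exp (-(((|z + M| : ℤ) : ℝ) - 5)) * Real.exp (2 * V * |u|)) :
    ∀ s : ℝ,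
      ‖α (-s) (∑ x ∈ Finset.Icc (-L) 0, n x)
            * (Complex.I • (h (-M - 1) * h (-M) - h (-M) * h (-M - 1)))
          - (Complex.I • (h (-M - 1) * h (-M) - h (-M) * h (-M - 1)))
            * α (-s) (∑ x ∈ Finset.Icc (-L) 0, n x)‖
        ≤ C * Real.exp 5 * (Real.exp (-(M : ℝ)) + Real.exp (-((L : ℝ) - (M : ℝ))))
            * (Real.exp (2 * V * |s|) - 1) / (2 * V) :=
  left_boundary_current_bound_general A n h α hα0 C V hC hV M L hM hL hcomm hdiffN hLR
end

section
/- For all integers L ≥ 0 and M ≥ L + 1, the identity i[N_{[−L,0]}, H_{[−M,M+1]}] = j_{0,1} − j_{−L−1,−L} holds. (In contrast, for L ≥ M ≥ 1 the same commutator equals j_{0,1}; this is the algebraic reason why the two limits L → ∞ and M → ∞ in Lemma 2 cannot be interchanged.) -/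
/-!
Commuting the charge `N_{[a,b]}` with a single term `h y` only sees the sites `y` and `y + 1`,
and by local charge conservation `[n (y+1), h y] = -[n y, h y]`. Hence, as long as the
Hamiltonian block covers every bond touching `[a,b]`, each site `x` contributes
`[n x, h x] - [n (x-1), h (x-1)]`, and the sum over `x ∈ [a,b]` telescopes to the currents
through the two boundary bonds `(b, b+1)` and `(a-1, a)`.
-/

open Finset

attribute [local instance 100] LieRing.ofAssociativeRing

theorem Int.sum_Icc_sub_sub_one {G : Type*} [AddCommGroup G] (f : ℤ → G) {a b : ℤ}
    (hab : a - 1 ≤ b) : ∑ x ∈ Icc a b, (f x - f (x - 1)) = f b - f (a - 1) := by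
  induction b, hab using Int.leInduction with
  | base => simp
  | succ b _ ih =>
    rw [← insert_Icc_right_eq_Icc_add_one (by omega), sum_insert (by simp), ih,
      add_sub_cancel_right]
    abel

section ChargeConservation

variable {A : Type*} [Ring A] (n h : ℤ → A)

theorem lie_charge_sum_hamiltonian
    (hloc : ∀ x y : ℤ, x ≠ y → x ≠ y + 1 → ⁅n x, h y⁆ = 0)
    (hcons : ∀ y : ℤ, ⁅n y + n (y + 1), h y⁆ = 0)
    {s : Finset ℤ} {x : ℤ} (hx : x ∈ s) (hx' : x - 1 ∈ s) :
    ⁅n x, ∑ y ∈ s, h y⁆ = ⁅n x, h x⁆ - ⁅n (x - 1), h (x - 1)⁆ := by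
  have hpair : ({x, x - 1} : Finset ℤ) ⊆ s := insert_subset hx (singleton_subset_iff.2 hx')
  have hback : ⁅n x, h (x - 1)⁆ = -⁅n (x - 1), h (x - 1)⁆ := by
    have := hcons (x - 1)
    rw [sub_add_cancel, add_lie] at this
    exact eq_neg_of_add_eq_zero_right this
  rw [lie_sum, ← sum_subset hpair, sum_pair (by omega), hback, ← sub_eq_add_neg]
  intro y _ hy
  simp only [mem_insert, mem_singleton, not_or] at hy
  exact hloc x y (Ne.symm hy.1) (by omega)

theorem lie_sum_charge_sum_hamiltonian
    (hloc : ∀ x y : ℤ, x ≠ y → x ≠ y + 1 → ⁅n x, h y⁆ = 0)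
    (hcons : ∀ y : ℤ, ⁅n y + n (y + 1), h y⁆ = 0)
    {a b c d : ℤ} (hab : a - 1 ≤ b) (hca : c ≤ a - 1) (hbd : b ≤ d) :
    ⁅∑ x ∈ Icc a b, n x, ∑ y ∈ Icc c d, h y⁆ = ⁅n b, h b⁆ - ⁅n (a - 1), h (a - 1)⁆ := by
  rw [sum_lie]
  calc ∑ x ∈ Icc a b, ⁅n x, ∑ y ∈ Icc c d, h y⁆
      = ∑ x ∈ Icc a b, (⁅n x, h x⁆ - ⁅n (x - 1), h (x - 1)⁆) := by
        refine sum_congr rfl fun x hx => ?_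
        rw [mem_Icc] at hx
        exact lie_charge_sum_hamiltonian n h hloc hcons
          (mem_Icc.2 ⟨by omega, by omega⟩) (mem_Icc.2 ⟨by omega, by omega⟩)
    _ = ⁅n b, h b⁆ - ⁅n (a - 1), h (a - 1)⁆ :=
        Int.sum_Icc_sub_sub_one (fun x => ⁅n x, h x⁆) hab

end ChargeConservation

/-- For integers `L ≥ 0` and `M ≥ L + 1`,
`i[N_{[-L,0]}, H_{[-M,M+1]}] = j_{0,1} - j_{-L-1,-L}`. -/
theorem commutator_charge_hamiltonian_large_M
    (A : Type*) [Ring A] [Algebra ℂ A]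
    (n h : ℤ → A)
    (hloc : ∀ x y : ℤ, x ≠ y → x ≠ y + 1 → n x * h y - h y * n x = 0)
    (hcons : ∀ y : ℤ, (n y + n (y + 1)) * h y - h y * (n y + n (y + 1)) = 0)
    (L M : ℤ) (hL : 0 ≤ L) (hM : L + 1 ≤ M) :
    Complex.I • ((∑ x ∈ Finset.Icc (-L) 0, n x) * (∑ y ∈ Finset.Icc (-M) M, h y)
        - (∑ y ∈ Finset.Icc (-M) M, h y) * (∑ x ∈ Finset.Icc (-L) 0, n x))
      = Complex.I • (n 0 * h 0 - h 0 * n 0)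
        - Complex.I • (n (-L - 1) * h (-L - 1) - h (-L - 1) * n (-L - 1)) := by
  have key := lie_sum_charge_sum_hamiltonian n h
    (fun x y hxy hxy' => (Ring.lie_def _ _).trans (hloc x y hxy hxy'))
    (fun y => (Ring.lie_def _ _).trans (hcons y))
    (a := -L) (b := 0) (c := -M) (d := M) (by omega) (by omega) (by omega)
  simp only [Ring.lie_def] at key
  rw [key, smul_sub]
end
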